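/- arXiv:1002.5041 — 2 statements merged into one kernel-verified Lean document; each statement's English description precedes it below -/
import Mathlib

section
/- Let n(z) = (2π)^{-1/2} e^{-z²/2} be the standard normal density and let z₀ be the unique positive solution of (z₀²/2)e^{z₀²/2} = e^{z₀²/2} + 1. For every finite signed measure ω on ℝ that is symmetric (i.e., invariant under the pushforward by z ↦ −z), has total variation norm ‖ω‖_TV = 1 and satisfies ∫ n(z) ω(dz) = 0, one has ∫ z² n(z) ω(dz) ≤ (2/√(2π)) e^{-z₀²/2}. Equality holds for the butterfly measure ω = x₀ δ_{z₀} + x₀ δ_{−z₀} − (1−2x₀) δ₀ with x₀ = 1/(2(1+e^{-z₀²/2})). -/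
open MeasureTheory Set

/-- Integral of a function with respect to a finite signed measure, defined via
the Jordan decomposition. -/
noncomputable def signedIntegral (f : ℝ → ℝ) (ω : SignedMeasure ℝ) : ℝ :=
  (∫ x, f x ∂ω.toJordanDecomposition.posPart)
    - (∫ x, f x ∂ω.toJordanDecomposition.negPart)

/-- The standard normal density. -/
noncomputable def stdNormalDensity (z : ℝ) : ℝ :=
  (Real.sqrt (2 * Real.pi))⁻¹ * Real.exp (-z ^ 2 / 2)

/-!
Weak duality. If `∫ n dω = 0`, then `∫ z² n dω = ∫ (z² - c) n dω ≤ sup |(z² - c) n| · ‖ω‖_TV`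
for every multiplier `c`. Take `c = z₀² - 2`: on `u = z²/2 ≥ 0` the function
`(u - c/2) e^{-u}` has its maximum `e^{-z₀²/2}` at `u = z₀²/2` and its minimum `-c/2` at `u = 0`,
and the equation defining `z₀` says precisely that `c/2 = e^{-z₀²/2}`. The butterfly puts positive
mass at `±z₀` and negative mass at `0`, exactly where `(z² - c) n` equals `± 2 e^{-z₀²/2}/√(2π)`,
so it attains the bound.
-/

open Real

lemma sub_one_eq_exp_neg_of_mul_exp_eq {b : ℝ} (h : b * exp b = exp b + 1) :
    b - 1 = exp (-b) := by
  have hinv : exp b * exp (-b) = 1 := by rw [← exp_add, add_neg_cancel, exp_zero]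
  linear_combination exp (-b) * h - (b - 1) * hinv

lemma sub_mul_exp_neg_le (u c : ℝ) : (u - c) * exp (-u) ≤ exp (-(c + 1)) :=
  calc (u - c) * exp (-u) ≤ exp (u - c - 1) * exp (-u) := by
        gcongr; linarith [add_one_le_exp (u - c - 1)]
    _ = exp (-(c + 1)) := by rw [← exp_add]; ring_nf

lemma abs_sub_mul_exp_neg_le {b u : ℝ} (hb : b - 1 = exp (-b)) (hu : 0 ≤ u) :
    |(u - (b - 1)) * exp (-u)| ≤ exp (-b) := by
  have hc : 0 ≤ b - 1 := hb ▸ (exp_pos _).le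
  have hexp : exp (-u) ≤ 1 := exp_le_one_iff.2 (by linarith)
  rw [abs_le]
  refine ⟨?_, by simpa using sub_mul_exp_neg_le u (b - 1)⟩
  rw [← hb]
  nlinarith [exp_pos (-u)]

@[fun_prop]
lemma continuous_stdNormalDensity : Continuous stdNormalDensity := by
  unfold stdNormalDensity; fun_prop

lemma stdNormalDensity_neg (z : ℝ) : stdNormalDensity (-z) = stdNormalDensity z := by
  simp [stdNormalDensity]

lemma stdNormalDensity_zero : stdNormalDensity 0 = (√(2 * π))⁻¹ := by
  simp [stdNormalDensity]

lemma abs_stdNormalDensity_le (z : ℝ) : |stdNormalDensity z| ≤ (√(2 * π))⁻¹ := by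
  have hexp : exp (-z ^ 2 / 2) ≤ 1 := exp_le_one_iff.2 (by nlinarith [sq_nonneg z])
  rw [stdNormalDensity, abs_of_nonneg (by positivity)]
  exact mul_le_of_le_one_right (by positivity) hexp

lemma integrable_stdNormalDensity (μ : Measure ℝ) [IsFiniteMeasure μ] :
    Integrable stdNormalDensity μ :=
  .of_bound continuous_stdNormalDensity.aestronglyMeasurable _
    (ae_of_all _ abs_stdNormalDensity_le)

lemma abs_sq_sub_mul_stdNormalDensity_le {b : ℝ} (hb : b - 1 = exp (-b)) (z : ℝ) :
    |(z ^ 2 - 2 * (b - 1)) * stdNormalDensity z| ≤ 2 / √(2 * π) * exp (-b) := by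
  have h := abs_sub_mul_exp_neg_le hb (by positivity : 0 ≤ z ^ 2 / 2)
  have heq : (z ^ 2 - 2 * (b - 1)) * stdNormalDensity z
      = 2 / √(2 * π) * ((z ^ 2 / 2 - (b - 1)) * exp (-(z ^ 2 / 2))) := by
    rw [stdNormalDensity, neg_div]; ring
  rw [heq, abs_mul, abs_of_pos (by positivity)]
  gcongr

namespace MeasureTheory

variable {α : Type*} [MeasurableSpace α]

lemma Measure.toSignedMeasure_map {β : Type*} [MeasurableSpace β] {φ : α → β}
    (hφ : Measurable φ) (μ : Measure α) [IsFiniteMeasure μ] :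
    μ.toSignedMeasure.map φ = (μ.map φ).toSignedMeasure := by
  ext i hi
  rw [VectorMeasure.map_apply _ hφ hi, Measure.toSignedMeasure_apply_measurable (hφ hi),
    Measure.toSignedMeasure_apply_measurable hi, map_measureReal_apply hφ hi]

lemma Measure.toSignedMeasure_toNNReal_smul {r : ℝ} (hr : 0 ≤ r) (μ : Measure α)
    [IsFiniteMeasure μ] : (r.toNNReal • μ).toSignedMeasure = r • μ.toSignedMeasure := by
  rw [Measure.toSignedMeasure_smul]
  ext i hi
  simp [NNReal.smul_def, Real.coe_toNNReal r hr]

lemma SignedMeasure.toJordanDecomposition_sub_toSignedMeasure {μ ν : Measure α}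
    [IsFiniteMeasure μ] [IsFiniteMeasure ν] (h : μ ⟂ₘ ν) :
    (μ.toSignedMeasure - ν.toSignedMeasure).toJordanDecomposition = ⟨μ, ν, h⟩ :=
  toJordanDecomposition_eq rfl

lemma SignedMeasure.totalVariation_sub_toSignedMeasure {μ ν : Measure α}
    [IsFiniteMeasure μ] [IsFiniteMeasure ν] (h : μ ⟂ₘ ν) :
    (μ.toSignedMeasure - ν.toSignedMeasure).totalVariation = μ + ν := by
  rw [SignedMeasure.totalVariation, SignedMeasure.toJordanDecomposition_sub_toSignedMeasure h]

end MeasureTheory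

section SignedIntegral

variable {ω : SignedMeasure ℝ} {f g : ℝ → ℝ}

lemma signedIntegral_add (hf : Integrable f ω.totalVariation)
    (hg : Integrable g ω.totalVariation) :
    signedIntegral (f + g) ω = signedIntegral f ω + signedIntegral g ω := by
  rw [SignedMeasure.totalVariation, integrable_add_measure] at hf hg
  simp only [signedIntegral, Pi.add_apply, integral_add hf.1 hg.1, integral_add hf.2 hg.2]
  ring

lemma signedIntegral_const_mul (c : ℝ) (f : ℝ → ℝ) :
    signedIntegral (fun z => c * f z) ω = c * signedIntegral f ω := by
  simp only [signedIntegral, integral_const_mul]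
  ring

lemma abs_signedIntegral_le {C : ℝ} (hf : ∀ z, |f z| ≤ C) :
    |signedIntegral f ω| ≤ C * ω.totalVariation.real univ := by
  have hbound : ∀ μ : Measure ℝ, ∀ᵐ z ∂μ, ‖f z‖ ≤ C := fun μ => ae_of_all _ hf
  calc |signedIntegral f ω|
      ≤ ‖∫ z, f z ∂ω.toJordanDecomposition.posPart‖
        + ‖∫ z, f z ∂ω.toJordanDecomposition.negPart‖ := abs_sub _ _
    _ ≤ C * ω.toJordanDecomposition.posPart.real univ
        + C * ω.toJordanDecomposition.negPart.real univ := by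
      gcongr <;> exact norm_integral_le_of_norm_le_const (hbound _)
    _ = C * ω.totalVariation.real univ := by
      rw [SignedMeasure.totalVariation, measureReal_add_apply, mul_add]

lemma signedIntegral_le_of_abs_sub_const_mul_le {c C : ℝ}
    (hg : Integrable g ω.totalVariation) (hfg : Continuous fun z => f z - c * g z)
    (hbound : ∀ z, |f z - c * g z| ≤ C) (hg0 : signedIntegral g ω = 0) :
    signedIntegral f ω ≤ C * ω.totalVariation.real univ := by
  have hint : Integrable (fun z => f z - c * g z) ω.totalVariation :=
    .of_bound hfg.aestronglyMeasurable C (ae_of_all _ hbound)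
  have hsplit : f = (fun z => f z - c * g z) + fun z => c * g z := by ext; simp
  rw [hsplit, signedIntegral_add hint (hg.const_mul c), signedIntegral_const_mul, hg0,
    mul_zero, add_zero]
  exact (le_abs_self _).trans (abs_signedIntegral_le hbound)

lemma signedIntegral_sub_toSignedMeasure {μ ν : Measure ℝ} [IsFiniteMeasure μ]
    [IsFiniteMeasure ν] (h : μ ⟂ₘ ν) (f : ℝ → ℝ) :
    signedIntegral f (μ.toSignedMeasure - ν.toSignedMeasure) = ∫ z, f z ∂μ - ∫ z, f z ∂ν := by
  rw [signedIntegral, SignedMeasure.toJordanDecomposition_sub_toSignedMeasure h]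

end SignedIntegral

section Butterfly

open Measure

noncomputable def butterfly (x a : ℝ) : SignedMeasure ℝ :=
  x • (dirac a).toSignedMeasure + x • (dirac (-a)).toSignedMeasure
    - (1 - 2 * x) • (dirac (0 : ℝ)).toSignedMeasure

variable {x a : ℝ}

lemma butterfly_map_neg (x a : ℝ) : (butterfly x a).map (fun z : ℝ => -z) = butterfly x a := by
  have hmap : ∀ b : ℝ, (dirac b).toSignedMeasure.map (fun z : ℝ => -z)
      = (dirac (-b)).toSignedMeasure := fun b => by
    simp_rw [toSignedMeasure_map measurable_neg, map_dirac' measurable_neg]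
  have hsub : ∀ μ ν : SignedMeasure ℝ,
      (μ - ν).map (fun z => -z) = μ.map (fun z => -z) - ν.map (fun z => -z) :=
    map_sub (VectorMeasure.mapGm _)
  rw [butterfly, hsub, VectorMeasure.map_add, VectorMeasure.map_smul, VectorMeasure.map_smul,
    VectorMeasure.map_smul, hmap, hmap, hmap, neg_neg, neg_zero, add_comm (x • _)]

lemma mutuallySingular_butterfly (ha : a ≠ 0) (p q : NNReal) :
    p • (dirac a + dirac (-a)) ⟂ₘ q • dirac (0 : ℝ) := by
  refine ⟨{0}, measurableSet_singleton 0, ?_, ?_⟩ <;> simp [ha]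

lemma butterfly_eq_sub (hx : 0 ≤ x) (hx' : 2 * x ≤ 1) :
    butterfly x a = (x.toNNReal • (dirac a + dirac (-a))).toSignedMeasure
      - ((1 - 2 * x).toNNReal • dirac (0 : ℝ)).toSignedMeasure := by
  rw [toSignedMeasure_toNNReal_smul hx, toSignedMeasure_toNNReal_smul (by linarith),
    toSignedMeasure_add, smul_add, butterfly]

lemma signedIntegral_butterfly (ha : a ≠ 0) (hx : 0 ≤ x) (hx' : 2 * x ≤ 1) (f : ℝ → ℝ) :
    signedIntegral f (butterfly x a) = x * (f a + f (-a)) - (1 - 2 * x) * f 0 := by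
  rw [butterfly_eq_sub hx hx',
    signedIntegral_sub_toSignedMeasure (mutuallySingular_butterfly ha _ _),
    integral_smul_nnreal_measure, integral_smul_nnreal_measure,
    integral_add_measure (integrable_dirac enorm_lt_top) (integrable_dirac enorm_lt_top)]
  simp [NNReal.smul_def, Real.coe_toNNReal _ hx,
    Real.coe_toNNReal _ (by linarith : 0 ≤ 1 - 2 * x)]
  ring

lemma totalVariation_butterfly (ha : a ≠ 0) (hx : 0 ≤ x) (hx' : 2 * x ≤ 1) :
    (butterfly x a).totalVariation univ = 1 := by
  rw [butterfly_eq_sub hx hx', SignedMeasure.totalVariation_sub_toSignedMeasure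
    (mutuallySingular_butterfly ha _ _)]
  simp [← ENNReal.coe_add, ← Real.toNNReal_add hx hx,
    ← Real.toNNReal_add (add_nonneg hx hx) (by linarith : 0 ≤ 1 - 2 * x)]
  ring

end Butterfly

theorem butterfly_optimal_among_symmetric_general
    (z₀ : ℝ)
    (hz₀_eq : (z₀ ^ 2 / 2) * Real.exp (z₀ ^ 2 / 2) = Real.exp (z₀ ^ 2 / 2) + 1)
    (x₀ : ℝ) (hx₀ : x₀ = 1 / (2 * (1 + Real.exp (-z₀ ^ 2 / 2)))) :
    (∀ ω : SignedMeasure ℝ,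
      ω.map (fun z : ℝ => -z) = ω →
      ω.totalVariation univ = 1 →
      signedIntegral stdNormalDensity ω = 0 →
      signedIntegral (fun z => z ^ 2 * stdNormalDensity z) ω ≤
        2 / Real.sqrt (2 * Real.pi) * Real.exp (-z₀ ^ 2 / 2)) ∧
    (∀ ωBF : SignedMeasure ℝ,
      ωBF = x₀ • (Measure.dirac z₀).toSignedMeasure
            + x₀ • (Measure.dirac (-z₀)).toSignedMeasure
            - (1 - 2 * x₀) • (Measure.dirac (0:ℝ)).toSignedMeasure →
      ωBF.map (fun z : ℝ => -z) = ωBF ∧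
      ωBF.totalVariation univ = 1 ∧
      signedIntegral stdNormalDensity ωBF = 0 ∧
      signedIntegral (fun z => z ^ 2 * stdNormalDensity z) ωBF =
        2 / Real.sqrt (2 * Real.pi) * Real.exp (-z₀ ^ 2 / 2)) := by
  rw [neg_div] at hx₀ ⊢
  have hb : z₀ ^ 2 / 2 - 1 = exp (-(z₀ ^ 2 / 2)) := sub_one_eq_exp_neg_of_mul_exp_eq hz₀_eq
  have hz₀ : z₀ ≠ 0 := by rintro rfl; norm_num at hb
  have hx₀z₀ : x₀ * z₀ ^ 2 = 1 := by
    rw [hx₀, ← hb]; field_simp; ring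
  have hx₀_nonneg : 0 ≤ x₀ := by rw [hx₀]; positivity
  have hx₀_le : 2 * x₀ ≤ 1 := by nlinarith [exp_pos (-(z₀ ^ 2 / 2))]
  refine ⟨fun ω _ htv hvega => ?_, fun ωBF hωBF => ?_⟩
  · have hbound (z : ℝ) : |z ^ 2 * stdNormalDensity z - (z₀ ^ 2 - 2) * stdNormalDensity z|
        ≤ 2 / √(2 * π) * exp (-(z₀ ^ 2 / 2)) := by
      rw [← sub_mul]
      convert abs_sq_sub_mul_stdNormalDensity_le hb z using 4; ring
    have htv' : ω.totalVariation.real univ = 1 := by simp [measureReal_def, htv]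
    simpa [htv'] using signedIntegral_le_of_abs_sub_const_mul_le
      (integrable_stdNormalDensity _) (by fun_prop) hbound hvega
  · have hn : stdNormalDensity z₀ = (√(2 * π))⁻¹ * exp (-(z₀ ^ 2 / 2)) := by
      rw [stdNormalDensity, neg_div]
    obtain rfl : ωBF = butterfly x₀ z₀ := hωBF
    refine ⟨butterfly_map_neg _ _, totalVariation_butterfly hz₀ hx₀_nonneg hx₀_le, ?_, ?_⟩
    · rw [signedIntegral_butterfly hz₀ hx₀_nonneg hx₀_le, stdNormalDensity_neg,
        stdNormalDensity_zero, hn]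
      linear_combination (√(2 * π))⁻¹ * hx₀z₀ - 2 * (√(2 * π))⁻¹ * x₀ * hb
    · rw [signedIntegral_butterfly hz₀ hx₀_nonneg hx₀_le, stdNormalDensity_neg, neg_sq, hn]
      linear_combination 2 * (√(2 * π))⁻¹ * exp (-(z₀ ^ 2 / 2)) * hx₀z₀

/-- Among symmetric, vega-neutral, unit total-variation signed
measures, `∫ z² n(z) ω(dz) ≤ (2/√(2π)) e^{-z₀²/2}`, with equality for the
vega-weighted butterfly `ω = x₀ δ_{z₀} + x₀ δ_{−z₀} − (1−2x₀) δ₀`,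
`x₀ = 1/(2(1+e^{-z₀²/2}))`, where `z₀` is the unique positive solution of
`(z₀²/2)e^{z₀²/2} = e^{z₀²/2} + 1`. -/
theorem butterfly_optimal_among_symmetric
    (z₀ : ℝ) (hz₀_pos : 0 < z₀)
    (hz₀_eq : (z₀ ^ 2 / 2) * Real.exp (z₀ ^ 2 / 2) = Real.exp (z₀ ^ 2 / 2) + 1)
    (x₀ : ℝ) (hx₀ : x₀ = 1 / (2 * (1 + Real.exp (-z₀ ^ 2 / 2)))) :
    (∀ ω : SignedMeasure ℝ,
      ω.map (fun z : ℝ => -z) = ω →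
      ω.totalVariation univ = 1 →
      signedIntegral stdNormalDensity ω = 0 →
      signedIntegral (fun z => z ^ 2 * stdNormalDensity z) ω ≤
        2 / Real.sqrt (2 * Real.pi) * Real.exp (-z₀ ^ 2 / 2)) ∧
    (∀ ωBF : SignedMeasure ℝ,
      ωBF = x₀ • (Measure.dirac z₀).toSignedMeasure
            + x₀ • (Measure.dirac (-z₀)).toSignedMeasure
            - (1 - 2 * x₀) • (Measure.dirac (0:ℝ)).toSignedMeasure →
      ωBF.map (fun z : ℝ => -z) = ωBF ∧
      ωBF.totalVariation univ = 1 ∧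
      signedIntegral stdNormalDensity ωBF = 0 ∧
      signedIntegral (fun z => z ^ 2 * stdNormalDensity z) ωBF =
        2 / Real.sqrt (2 * Real.pi) * Real.exp (-z₀ ^ 2 / 2)) :=
  butterfly_optimal_among_symmetric_general z₀ hz₀_eq x₀ hx₀
end

section
/- Let n(z) = (2π)^{-1/2} e^{-z²/2} be the standard normal density. For every finite signed measure ω on ℝ with total variation norm ‖ω‖_TV ≤ 1 and ∫ n(z) ω(dz) = 0, one has |∫ z n(z) ω(dz)| ≤ n(1) = e^{-1/2}/√(2π). -/
/-!
The bound holds pointwise: by AM–GM, `|z| ≤ (z² + 1) / 2 ≤ exp ((z² - 1) / 2)`, so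
`|z| n(z) ≤ n(1)` for every `z`. Integrating a function bounded by `M` against a signed measure
gives at most `M` times its total variation, which is at most one.
-/

open MeasureTheory Set

lemma abs_signedIntegral_le_of_abs_le {f : ℝ → ℝ} {M : ℝ} (hf : ∀ x, |f x| ≤ M)
    (ω : SignedMeasure ℝ) : |signedIntegral f ω| ≤ M * ω.totalVariation.real univ := by
  set μp := ω.toJordanDecomposition.posPart
  set μn := ω.toJordanDecomposition.negPart
  have hbound (μ : Measure ℝ) [IsFiniteMeasure μ] : |∫ x, f x ∂μ| ≤ M * μ.real univ := by
    simpa only [Real.norm_eq_abs] using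
      norm_integral_le_of_norm_le_const (μ := μ) (f := f) (Filter.Eventually.of_forall hf)
  have htv : ω.totalVariation.real univ = μp.real univ + μn.real univ :=
    measureReal_add_apply
  calc |signedIntegral f ω| ≤ |∫ x, f x ∂μp| + |∫ x, f x ∂μn| := abs_sub _ _
    _ ≤ M * μp.real univ + M * μn.real univ := add_le_add (hbound μp) (hbound μn)
    _ = M * ω.totalVariation.real univ := by rw [htv, mul_add]

lemma abs_mul_exp_neg_sq_div_two_le (z : ℝ) : |z| * Real.exp (-z ^ 2 / 2) ≤ Real.exp (-1 / 2) := by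
  have habs : |z| ≤ Real.exp ((z ^ 2 - 1) / 2) := by
    nlinarith [Real.add_one_le_exp ((z ^ 2 - 1) / 2), sq_nonneg (|z| - 1), sq_abs z]
  calc |z| * Real.exp (-z ^ 2 / 2) ≤ Real.exp ((z ^ 2 - 1) / 2) * Real.exp (-z ^ 2 / 2) := by
        gcongr
    _ = Real.exp (-1 / 2) := by rw [← Real.exp_add]; ring_nf

lemma stdNormalDensity_one : stdNormalDensity 1 = Real.exp (-1 / 2) / Real.sqrt (2 * Real.pi) := by
  rw [stdNormalDensity, one_pow, inv_mul_eq_div]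

lemma abs_mul_stdNormalDensity_le (z : ℝ) : |z * stdNormalDensity z| ≤ stdNormalDensity 1 := by
  have hc : 0 ≤ (Real.sqrt (2 * Real.pi))⁻¹ := by positivity
  rw [stdNormalDensity_one, div_eq_inv_mul, stdNormalDensity, abs_mul, abs_mul, abs_of_nonneg hc,
    abs_of_pos (Real.exp_pos _), mul_left_comm]
  exact mul_le_mul_of_nonneg_left (abs_mul_exp_neg_sq_div_two_le z) hc

theorem skew_term_bound_general
    (ω : SignedMeasure ℝ)
    (hTV : ω.totalVariation univ ≤ 1) :
    |signedIntegral (fun z => z * stdNormalDensity z) ω| ≤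
      Real.exp (-(1:ℝ)/2) / Real.sqrt (2 * Real.pi) := by
  have hmass : ω.totalVariation.real univ ≤ 1 :=
    ENNReal.toReal_le_of_le_ofReal zero_le_one (by simpa using hTV)
  have hn1 : 0 ≤ stdNormalDensity 1 := by rw [stdNormalDensity]; positivity
  calc |signedIntegral (fun z => z * stdNormalDensity z) ω|
      ≤ stdNormalDensity 1 * ω.totalVariation.real univ :=
        abs_signedIntegral_le_of_abs_le abs_mul_stdNormalDensity_le ω
    _ ≤ stdNormalDensity 1 := mul_le_of_le_one_right hn1 hmass
    _ = Real.exp (-(1:ℝ)/2) / Real.sqrt (2 * Real.pi) := stdNormalDensity_one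

/-- For every vega-neutral signed measure of total variation at
most one, `|∫ z n(z) ω(dz)| ≤ n(1) = e^{-1/2}/√(2π)`. -/
theorem skew_term_bound
    (ω : SignedMeasure ℝ)
    (hTV : ω.totalVariation univ ≤ 1)
    (hneutral : signedIntegral stdNormalDensity ω = 0) :
    |signedIntegral (fun z => z * stdNormalDensity z) ω| ≤
      Real.exp (-(1:ℝ)/2) / Real.sqrt (2 * Real.pi) :=
  skew_term_bound_general ω hTV
end
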